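/- arXiv:2308.16042 — 6 statements merged into one kernel-verified Lean document; each statement's English description precedes it below -/
import Mathlib

section
/- For any integers u ≥ n ≥ 1 and s ≥ 2n, and t = ⌈lg(u/n)/lg(s/n)⌉ + 5, there exists a function Γ : [u] × [t] → [s] such that for every subset S ⊆ [u] with 1 ≤ |S| ≤ n, the neighbor set Γ(S) = {Γ(x,j) : x ∈ S, j ∈ [t]} satisfies |Γ(S)| ≥ |S|. -/
open Finset Real

lemma aux_pow_le_exp_fact (j : ℕ) : (j:ℝ)^j ≤ Real.exp 1 ^ j * j.factorial := by
  have h1 : (j:ℝ)^j / (j.factorial:ℝ) ≤ Real.exp j := by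
    calc (j:ℝ)^j / (j.factorial:ℝ)
        ≤ ∑ i ∈ Finset.range (j+1), (j:ℝ)^i / (i.factorial:ℝ) :=
          Finset.single_le_sum (f := fun i => (j:ℝ)^i / (i.factorial:ℝ))
            (fun i _ => by positivity) (Finset.self_mem_range_succ j)
      _ ≤ Real.exp j := Real.sum_le_exp_of_nonneg (by positivity) _
  have h2 : Real.exp (j:ℝ) = Real.exp 1 ^ j := by
    rw [← Real.exp_nat_mul]; norm_num
  have hf : (0:ℝ) < j.factorial := by positivity
  rw [div_le_iff₀ hf] at h1
  calc (j:ℝ)^j ≤ Real.exp j * j.factorial := h1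
    _ = Real.exp 1 ^ j * j.factorial := by rw [h2]

lemma aux_le_geom : ∀ j : ℕ, (j:ℝ) ≤ (3/2)^j
  | 0 => by norm_num
  | 1 => by norm_num
  | 2 => by norm_num
  | (j+3) => by
      have ih := aux_le_geom (j+2)
      have hc : ((j+2:ℕ):ℝ) = (j:ℝ)+2 := by push_cast; ring
      calc ((j+3:ℕ):ℝ) = (j:ℝ)+3 := by push_cast; ring
        _ ≤ (3/2) * ((j:ℝ)+2) := by nlinarith [Nat.cast_nonneg (α := ℝ) j]
        _ ≤ (3/2) * (3/2)^(j+2) := by nlinarith [ih, hc.symm ▸ ih]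
        _ = (3/2)^(j+3) := by ring

lemma exp_one_sq_le : Real.exp 1 ^ 2 ≤ 8 := by
  nlinarith [Real.exp_one_lt_d9, Real.exp_pos 1]

lemma term_bound (n s u m : ℕ) (hn : 1 ≤ n) (hun : n ≤ u) (hs : 2*n ≤ s)
    (hm : ((n:ℝ)/s)^m ≤ (n:ℝ)/u) (k : ℕ) (hk2 : 2 ≤ k) (hkn : k ≤ n) :
    (u.choose k : ℝ) * (s.choose (k-1)) * (((k-1 : ℕ):ℝ)/s)^(k*(m+5)) ≤ (3/4)^k / 16 := by
  obtain ⟨j, rfl⟩ : ∃ j, k = j + 1 := ⟨k - 1, by omega⟩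
  have hj1 : 1 ≤ j := by omega
  simp only [Nat.add_sub_cancel]
  have hjpos : (0:ℝ) < j := by exact_mod_cast hj1
  have hnpos : (0:ℝ) < n := by exact_mod_cast hn
  have hupos : (0:ℝ) < u := by exact_mod_cast (le_trans hn hun)
  have hspos : (0:ℝ) < s := by exact_mod_cast (by omega : 0 < s)
  have hjn : (j:ℝ) ≤ n := by exact_mod_cast (by omega : j ≤ n)
  have hsn : 2*(n:ℝ) ≤ s := by exact_mod_cast hs
  have step1 : ((j:ℝ)/s)^(m+5) ≤ ((j:ℝ)/s)^5 * ((n:ℝ)/u) := by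
    calc ((j:ℝ)/s)^(m+5) = ((j:ℝ)/s)^5 * ((j:ℝ)/s)^m := by ring
      _ ≤ ((j:ℝ)/s)^5 * ((n:ℝ)/s)^m := by gcongr <;> positivity
      _ ≤ ((j:ℝ)/s)^5 * ((n:ℝ)/u) := by gcongr
  have step2 : (((j:ℝ)/s))^((j+1)*(m+5)) ≤ (((j:ℝ)/s)^5 * ((n:ℝ)/u))^(j+1) := by
    rw [mul_comm (j+1) (m+5), pow_mul]
    exact pow_le_pow_left₀ (by positivity) step1 _
  have cu : (u.choose (j+1) : ℝ) ≤ (u:ℝ)^(j+1)/((j+1).factorial:ℝ) := by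
    exact_mod_cast Nat.choose_le_pow_div (j+1) u
  have cs : (s.choose j : ℝ) ≤ (s:ℝ)^j/(j.factorial:ℝ) := by
    exact_mod_cast Nat.choose_le_pow_div j s
  have hfj : (0:ℝ) < j.factorial := by positivity
  have hfj1 : (0:ℝ) < (j+1).factorial := by positivity
  have hpf : (j:ℝ)^(2*j+2) ≤ 8^j * (j.factorial:ℝ)^2 * j^2 := by
    have h1 : (j:ℝ)^(2*j+2) = ((j:ℝ)^j)^2 * j^2 := by ring
    have h2 : ((j:ℝ)^j)^2 ≤ (Real.exp 1 ^ j * j.factorial)^2 := by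
      apply pow_le_pow_left₀ (by positivity) (aux_pow_le_exp_fact j)
    have h3 : (Real.exp 1 ^ j * (j.factorial:ℝ))^2 = (Real.exp 1 ^ 2)^j * (j.factorial:ℝ)^2 := by
      ring
    have h4 : (Real.exp 1 ^ 2)^j ≤ 8^j := pow_le_pow_left₀ (by positivity) exp_one_sq_le j
    calc (j:ℝ)^(2*j+2) = ((j:ℝ)^j)^2 * j^2 := h1
      _ ≤ (Real.exp 1 ^ j * j.factorial)^2 * j^2 := by gcongr
      _ = (Real.exp 1 ^ 2)^j * (j.factorial:ℝ)^2 * j^2 := by rw [h3]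
      _ ≤ 8^j * (j.factorial:ℝ)^2 * j^2 := by gcongr <;> positivity
  calc (u.choose (j+1) : ℝ) * (s.choose j) * (((j:ℝ))/s)^((j+1)*(m+5))
      ≤ ((u:ℝ)^(j+1)/((j+1).factorial:ℝ)) * ((s:ℝ)^j/(j.factorial:ℝ)) * (((j:ℝ)/s)^5 * ((n:ℝ)/u))^(j+1) := by
        gcongr <;> positivity
    _ = (j:ℝ)^(5*j+5) * (n:ℝ)^(j+1) / (((j+1).factorial:ℝ) * (j.factorial:ℝ) * (s:ℝ)^(4*j+5)) := by
        field_simp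
        rw [div_pow]
        field_simp
        ring
    _ ≤ (j:ℝ)^(5*j+5) * (n:ℝ)^(j+1) / (((j+1).factorial:ℝ) * (j.factorial:ℝ) * (2*(n:ℝ))^(4*j+5)) := by
        gcongr <;> positivity
    _ = ((j:ℝ)^(2*j+2)/(((j+1).factorial:ℝ) * (j.factorial:ℝ) * 2^(4*j+5))) * ((j:ℝ)^(3*j+3) / (n:ℝ)^(3*j+4)) := by
        field_simp
        ring
    _ ≤ ((j:ℝ)^(2*j+2)/(((j+1).factorial:ℝ) * (j.factorial:ℝ) * 2^(4*j+5))) * 1 := by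
        gcongr ((j:ℝ)^(2*j+2)/(((j+1).factorial:ℝ) * (j.factorial:ℝ) * 2^(4*j+5))) * ?_
        rw [div_le_one (by positivity)]
        calc (j:ℝ)^(3*j+3) ≤ (n:ℝ)^(3*j+3) := pow_le_pow_left₀ (by positivity) hjn _
          _ ≤ (n:ℝ)^(3*j+4) := pow_le_pow_right₀ (by exact_mod_cast hn) (by omega)
    _ = (j:ℝ)^(2*j+2)/(((j+1).factorial:ℝ) * (j.factorial:ℝ) * 2^(4*j+5)) := mul_one _
    _ ≤ (8^j * (j.factorial:ℝ)^2 * j^2)/(((j+1).factorial:ℝ) * (j.factorial:ℝ) * 2^(4*j+5)) := by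
        gcongr
    _ = ((j:ℝ)^2/((j:ℝ)+1)) * (1/2^(j+5)) := by
        rw [Nat.factorial_succ, show (8:ℝ)^j = 2^(3*j) by
          rw [show (8:ℝ) = 2^3 by norm_num, ← pow_mul]]
        push_cast
        field_simp
        ring
    _ ≤ (j:ℝ) * (1/2^(j+5)) := by
        gcongr ?_ * _
        rw [div_le_iff₀ (by positivity)]
        nlinarith
    _ ≤ (3/2)^j * (1/2^(j+5)) := by gcongr; exact aux_le_geom j
    _ = (3/4)^j * (1/32) := by
        rw [div_pow, div_pow, show (4:ℝ)^j = 2^j*2^j by rw [← mul_pow]; norm_num,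
          show (2:ℝ)^(j+5) = 2^j * 32 by rw [pow_add]; norm_num]
        field_simp
    _ ≤ (3/4)^j * (3/64) := by gcongr (3/4:ℝ)^j * ?_; norm_num
    _ = (3/4)^(j+1)/16 := by rw [pow_succ]; ring


lemma log_step (u n s : ℕ) (hn : 1 ≤ n) (hun : n ≤ u) (hs : 2*n ≤ s) :
    ((n:ℝ)/s)^(⌈Real.logb 2 ((u:ℝ)/n) / Real.logb 2 ((s:ℝ)/n)⌉₊) ≤ (n:ℝ)/u := by
  set m := ⌈Real.logb 2 ((u:ℝ)/n) / Real.logb 2 ((s:ℝ)/n)⌉₊ with hmdef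
  have hnpos : (0:ℝ) < n := by exact_mod_cast hn
  have hupos : (0:ℝ) < u := by exact_mod_cast lt_of_lt_of_le hn hun
  have hspos : (0:ℝ) < s := by exact_mod_cast (by omega : 0 < s)
  set a : ℝ := (u:ℝ)/n with ha
  set b : ℝ := (s:ℝ)/n with hb
  have ha1 : 1 ≤ a := by
    rw [ha, le_div_iff₀ hnpos]; simpa using (by exact_mod_cast hun : (n:ℝ) ≤ u)
  have hb2 : 2 ≤ b := by
    rw [hb, le_div_iff₀ hnpos]
    exact_mod_cast hs
  have hb1 : 1 < b := lt_of_lt_of_le one_lt_two hb2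
  have hlogb : 0 < Real.log b := Real.log_pos hb1
  have hratio : Real.logb 2 a / Real.logb 2 b = Real.log a / Real.log b := by
    have h2 : Real.log 2 ≠ 0 := ne_of_gt (Real.log_pos one_lt_two)
    have hb0 : Real.log b ≠ 0 := ne_of_gt hlogb
    unfold Real.logb
    field_simp
  have hL : Real.log a / Real.log b ≤ (m:ℝ) := by
    rw [← hratio]; exact Nat.le_ceil _
  have hab : a ≤ b^m := by
    have h1 : Real.log a ≤ (m:ℝ) * Real.log b := by
      rwa [div_le_iff₀ hlogb] at hL
    have h2 : Real.log a ≤ Real.log (b^m) := by rwa [Real.log_pow]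
    have hapos : 0 < a := lt_of_lt_of_le one_pos ha1
    have hbmpos : (0:ℝ) < b^m := by positivity
    exact (Real.log_le_log_iff hapos hbmpos).1 h2
  have hns : (n:ℝ)/s = 1/b := by
    rw [hb, one_div_div]
  have hnu : (n:ℝ)/u = 1/a := by
    rw [ha, one_div_div]
  rw [hns, hnu, div_pow, one_pow]
  apply one_div_le_one_div_of_le (lt_of_lt_of_le one_pos ha1) hab

open Finset

/-- Existence of `(≤ n)`-non-contractive expanders: for `u ≥ n ≥ 1`, `s ≥ 2n` and
`t = ⌈lg(u/n)/lg(s/n)⌉ + 5`, there is `Γ : [u] × [t] → [s]` such that every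
`S ⊆ [u]` with `1 ≤ |S| ≤ n` has `|Γ(S)| ≥ |S|`. -/
theorem stmt0 (u n s t : ℕ) (hn : 1 ≤ n) (hun : n ≤ u) (hs : 2 * n ≤ s)
    (ht : t = ⌈Real.logb 2 ((u : ℝ) / n) / Real.logb 2 ((s : ℝ) / n)⌉₊ + 5) :
    ∃ Γ : Fin u × Fin t → Fin s,
      ∀ S : Finset (Fin u), 1 ≤ S.card → S.card ≤ n →
        S.card ≤ ((S ×ˢ (Finset.univ : Finset (Fin t))).image Γ).card := by
  classical
  set m := ⌈Real.logb 2 ((u : ℝ) / n) / Real.logb 2 ((s : ℝ) / n)⌉₊ with hmdef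
  have hmkey : ((n:ℝ)/s)^m ≤ (n:ℝ)/u := log_step u n s hn hun hs
  have hspos : 0 < s := by omega
  have hupos : 0 < u := by omega
  set badSet : Finset (Fin u) × Finset (Fin s) → Finset (Fin u × Fin t → Fin s) := fun p =>
    Fintype.piFinset fun q => if q ∈ p.1 ×ˢ (Finset.univ : Finset (Fin t)) then p.2 else Finset.univ
    with hbadSet
  set P : Finset (Finset (Fin u) × Finset (Fin s)) :=
    Finset.univ.filter fun p => 2 ≤ p.1.card ∧ p.1.card ≤ n ∧ p.2.card = p.1.card - 1 with hPdef
  set Bad : Finset (Fin u × Fin t → Fin s) :=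
    Finset.univ.filter fun Γ => ∃ S : Finset (Fin u), 1 ≤ S.card ∧ S.card ≤ n ∧
      ((S ×ˢ (Finset.univ : Finset (Fin t))).image Γ).card < S.card with hBadDef
  suffices hlt : Bad.card < Fintype.card (Fin u × Fin t → Fin s) by
    have hne : (Badᶜ).Nonempty := by
      rw [← Finset.card_pos, Finset.card_compl]
      omega
    obtain ⟨Γ, hΓ⟩ := hne
    rw [Finset.mem_compl] at hΓ
    refine ⟨Γ, fun S h1 h2 => ?_⟩
    by_contra hlt2
    exact hΓ (Finset.mem_filter.2 ⟨Finset.mem_univ _, S, h1, h2, by omega⟩)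
  -- Step 1: Bad is covered by the union of the badSets
  have hsub : Bad ⊆ P.biUnion badSet := by
    intro Γ hΓ
    obtain ⟨-, S, h1, h2, himg⟩ := Finset.mem_filter.1 hΓ
    have htne : (Finset.univ : Finset (Fin t)).Nonempty := ⟨⟨0, by omega⟩, Finset.mem_univ _⟩
    have hSne : S.Nonempty := Finset.card_pos.1 h1
    have himne : ((S ×ˢ (Finset.univ : Finset (Fin t))).image Γ).Nonempty :=
      (hSne.product htne).image Γ
    have himpos := Finset.card_pos.2 himne
    have hS2 : 2 ≤ S.card := by omega
    have hIc : ((S ×ˢ (Finset.univ : Finset (Fin t))).image Γ).card ≤ S.card - 1 := by omega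
    obtain ⟨T, hIT, hTc⟩ := Finset.exists_superset_card_eq hIc
      (by rw [Fintype.card_fin]; omega)
    refine Finset.mem_biUnion.2 ⟨(S, T), ?_, ?_⟩
    · exact Finset.mem_filter.2 ⟨Finset.mem_univ _, hS2, h2, hTc⟩
    · rw [hbadSet]
      rw [Fintype.mem_piFinset]
      intro q
      by_cases hq : q ∈ S ×ˢ (Finset.univ : Finset (Fin t))
      · simp only [hq, if_pos]
        exact hIT (Finset.mem_image_of_mem Γ hq)
      · simp [hq]
  -- Step 2: cardinality of each badSet
  have hcount : ∀ p ∈ P, (badSet p).card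
      = (p.1.card - 1)^(p.1.card * t) * s^(u*t - p.1.card * t) := by
    intro p hp
    obtain ⟨-, h2k, hkn, hTc⟩ := Finset.mem_filter.1 hp
    rw [hbadSet]
    rw [Fintype.card_piFinset]
    have hcc : ∀ q : Fin u × Fin t,
        (if q ∈ p.1 ×ˢ (Finset.univ : Finset (Fin t)) then p.2
          else (Finset.univ : Finset (Fin s))).card
        = if q ∈ p.1 ×ˢ (Finset.univ : Finset (Fin t)) then p.2.card else s := by
      intro q; split <;> simp
    rw [Finset.prod_congr rfl (fun q _ => hcc q), Finset.prod_ite, Finset.prod_const,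
      Finset.prod_const, Finset.filter_univ_mem]
    have hcompl : Finset.univ.filter
        (fun q => ¬ q ∈ p.1 ×ˢ (Finset.univ : Finset (Fin t)))
        = (p.1 ×ˢ (Finset.univ : Finset (Fin t)))ᶜ := by ext x; simp
    rw [hcompl, Finset.card_compl, Finset.card_product, Finset.card_univ, Fintype.card_fin,
      Fintype.card_prod, Fintype.card_fin, Fintype.card_fin, hTc]
  -- Step 3: group the pairs by the size of the first component
  have hPeq : P = (Finset.Icc 2 n).biUnion (fun k =>
      Finset.powersetCard k (Finset.univ : Finset (Fin u))
        ×ˢ Finset.powersetCard (k-1) (Finset.univ : Finset (Fin s))) := by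
    ext p
    simp only [hPdef, Finset.mem_filter, Finset.mem_univ, true_and, Finset.mem_biUnion,
      Finset.mem_Icc, Finset.mem_product, Finset.mem_powersetCard_univ]
    constructor
    · rintro ⟨ha, hb, hc⟩; exact ⟨p.1.card, ⟨ha, hb⟩, rfl, hc⟩
    · rintro ⟨k, ⟨hk1, hk2⟩, ha, hb⟩
      refine ⟨by omega, by omega, by omega⟩
  have hdisj : (↑(Finset.Icc 2 n) : Set ℕ).PairwiseDisjoint (fun k =>
      Finset.powersetCard k (Finset.univ : Finset (Fin u))
        ×ˢ Finset.powersetCard (k-1) (Finset.univ : Finset (Fin s))) := by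
    intro k _ k' _ hkk'
    rw [Function.onFun, Finset.disjoint_left]
    intro p hp hp'
    rw [Finset.mem_product, Finset.mem_powersetCard_univ] at hp hp'
    exact hkk' (hp.1.symm.trans hp'.1)
  -- Step 4: the union bound
  have hBadle : Bad.card ≤ ∑ k ∈ Finset.Icc 2 n,
      u.choose k * (s.choose (k-1)) * ((k-1)^(k*t) * s^(u*t - k*t)) := by
    calc Bad.card ≤ (P.biUnion badSet).card := Finset.card_le_card hsub
      _ ≤ ∑ p ∈ P, (badSet p).card := Finset.card_biUnion_le
      _ = ∑ p ∈ P, (p.1.card - 1)^(p.1.card * t) * s^(u*t - p.1.card * t) :=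
          Finset.sum_congr rfl hcount
      _ = ∑ k ∈ Finset.Icc 2 n, ∑ p ∈ (Finset.powersetCard k (Finset.univ : Finset (Fin u))
            ×ˢ Finset.powersetCard (k-1) (Finset.univ : Finset (Fin s))),
            (p.1.card - 1)^(p.1.card * t) * s^(u*t - p.1.card * t) := by
          rw [hPeq, Finset.sum_biUnion hdisj]
      _ = ∑ k ∈ Finset.Icc 2 n,
            u.choose k * (s.choose (k-1)) * ((k-1)^(k*t) * s^(u*t - k*t)) := by
          refine Finset.sum_congr rfl (fun k hk => ?_)
          have : ∀ p ∈ (Finset.powersetCard k (Finset.univ : Finset (Fin u))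
              ×ˢ Finset.powersetCard (k-1) (Finset.univ : Finset (Fin s))),
              (p.1.card - 1)^(p.1.card * t) * s^(u*t - p.1.card * t)
              = (k-1)^(k*t) * s^(u*t - k*t) := by
            intro p hp
            rw [Finset.mem_product, Finset.mem_powersetCard_univ] at hp
            rw [hp.1]
          rw [Finset.sum_congr rfl this, Finset.sum_const, Finset.card_product,
            Finset.card_powersetCard, Finset.card_powersetCard, Finset.card_univ,
            Finset.card_univ, Fintype.card_fin, Fintype.card_fin, smul_eq_mul]
  -- Step 5: the numeric estimate
  have hnum : ∑ k ∈ Finset.Icc 2 n,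
      u.choose k * (s.choose (k-1)) * ((k-1)^(k*t) * s^(u*t - k*t)) < s^(u*t) := by
    rw [← Nat.cast_lt (α := ℝ)]
    push_cast [Nat.cast_sum]
    have hterm : ∀ k ∈ Finset.Icc 2 n,
        (u.choose k : ℝ) * (s.choose (k-1)) * (((k-1:ℕ):ℝ)^(k*t) * (s:ℝ)^(u*t - k*t))
        ≤ (3/4)^k/16 * (s:ℝ)^(u*t) := by
      intro k hk
      rw [Finset.mem_Icc] at hk
      have hb := term_bound n s u m hn hun hs hmkey k hk.1 hk.2
      rw [← ht] at hb
      have hkt : k * t ≤ u * t := Nat.mul_le_mul_right t (le_trans hk.2 hun)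
      have hspow : (s:ℝ)^(u*t) = (s:ℝ)^(k*t) * (s:ℝ)^(u*t - k*t) := by
        rw [← pow_add]; congr 1; omega
      have hsne : ((s:ℝ))^(k*t) ≠ 0 := by positivity
      have heq : (u.choose k : ℝ) * (s.choose (k-1)) * (((k-1:ℕ):ℝ)^(k*t) * (s:ℝ)^(u*t - k*t))
          = (u.choose k : ℝ) * (s.choose (k-1)) * (((k-1:ℕ):ℝ)/s)^(k*t) * (s:ℝ)^(u*t) := by
        rw [div_pow, hspow]
        field_simp
      rw [heq]
      have hsp : (0:ℝ) ≤ (s:ℝ)^(u*t) := by positivity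
      exact mul_le_mul_of_nonneg_right hb hsp
    have hsum : ∑ k ∈ Finset.Icc 2 n, ((3:ℝ)/4)^k/16 ≤ 1/4 := by
      have h1 : ∑ k ∈ Finset.Icc 2 n, ((3:ℝ)/4)^k ≤ ∑ k ∈ Finset.range (n+1), ((3:ℝ)/4)^k := by
        apply Finset.sum_le_sum_of_subset_of_nonneg
        · intro k hk
          rw [Finset.mem_Icc] at hk
          rw [Finset.mem_range]; omega
        · intro i _ _; positivity
      have h2 : ∑ k ∈ Finset.range (n+1), ((3:ℝ)/4)^k = (((3:ℝ)/4)^(n+1) - 1)/((3/4) - 1) :=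
        geom_sum_eq (by norm_num) _
      have h3 : (0:ℝ) ≤ ((3:ℝ)/4)^(n+1) := by positivity
      have h4 : ∑ k ∈ Finset.range (n+1), ((3:ℝ)/4)^k ≤ 4 := by
        rw [h2]
        have h5 : (((3:ℝ)/4)^(n+1) - 1)/((3/4) - 1) = (1 - (3/4)^(n+1)) * 4 := by ring
        rw [h5]; nlinarith
      calc ∑ k ∈ Finset.Icc 2 n, ((3:ℝ)/4)^k/16
          = (∑ k ∈ Finset.Icc 2 n, ((3:ℝ)/4)^k)/16 := by rw [Finset.sum_div]
        _ ≤ 4/16 := by linarith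
        _ = 1/4 := by norm_num
    have hsppos : (0:ℝ) < (s:ℝ)^(u*t) := by positivity
    calc ∑ k ∈ Finset.Icc 2 n,
          (u.choose k : ℝ) * (s.choose (k-1)) * (((k-1:ℕ):ℝ)^(k*t) * (s:ℝ)^(u*t - k*t))
        ≤ ∑ k ∈ Finset.Icc 2 n, (3/4:ℝ)^k/16 * (s:ℝ)^(u*t) := Finset.sum_le_sum hterm
      _ = (∑ k ∈ Finset.Icc 2 n, (3/4:ℝ)^k/16) * (s:ℝ)^(u*t) := by rw [Finset.sum_mul]
      _ ≤ (1/4) * (s:ℝ)^(u*t) := by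
          apply mul_le_mul_of_nonneg_right hsum (le_of_lt hsppos)
      _ < (s:ℝ)^(u*t) := by linarith
  have hNcard : Fintype.card (Fin u × Fin t → Fin s) = s^(u*t) := by
    rw [Fintype.card_fun, Fintype.card_prod, Fintype.card_fin, Fintype.card_fin, Fintype.card_fin]
  omega
end

section
/- Let p be a prime with p ≥ 2e·u, and let Γ : [u] × [t] → [s] be a function such that for every S ⊆ [u] with 1 ≤ |S| ≤ n we have |Γ(S)| ≥ 2|S|. Then there exists a function Π : [u] × [t] → 𝔽_p such that the u × s matrix A over 𝔽_p with entries A(x,y) = Σ_{j : Γ(x,j)=y} Π(x,j) has the property that every set of at most n rows of A is linearly independent over 𝔽_p. -/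
/-!
Union bound over the nonzero row combinations `c` with support `S`, `1 ≤ |S| ≤ n`. For fixed `c`,
the weights `W` with `cᵀ A_W = 0` form the kernel of a linear map whose range contains every unit
vector `e_y` with `y ∈ Γ(S)`, so they make up a fraction at most `p^(-|Γ(S)|) ≤ p^(-2|S|)` of all
weights. Summing over `c` gives `(1 + (p-1)/p²)^u - 1 < (1 + 1/p)^u - 1 ≤ e^(u/p) - 1 < 1`, so some
`W` is bad for no `c`.
-/

open Finset

section RowIndependence

variable {ι R M : Type*} [Fintype ι] [Ring R] [DecidableEq R] [AddCommGroup M] [Module R M]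

theorem linearIndepOn_of_sum_smul_ne_zero {v : ι → M} {n : ℕ}
    (hv : ∀ c : ι → R, c ≠ 0 → #{x | c x ≠ 0} ≤ n → ∑ x, c x • v x ≠ 0)
    {X : Finset ι} (hX : #X ≤ n) : LinearIndepOn R v X := by
  classical
  rw [linearIndepOn_finset_iff]
  intro f hf i hi
  by_contra hfi
  let c : ι → R := fun x => if x ∈ X then f x else 0
  refine hv c (fun hc => hfi ?_) ((card_le_card fun x hx => ?_).trans hX) ?_
  · simpa [c, hi] using congr_fun hc i
  · by_contra hxX
    simp [c, hxX] at hx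
  · rw [← hf, ← Fintype.sum_extend_by_zero]
    simp [c, ite_smul]

end RowIndependence

section Counting

variable {ι K R : Type*} [Fintype ι] [DecidableEq ι] [Fintype K] [Zero K] [DecidableEq K]
  [CommSemiring R]

theorem sum_pow_card_support (r : R) :
    ∑ c : ι → K, r ^ #{x | c x ≠ 0} = (1 + (Fintype.card K - 1) • r) ^ Fintype.card ι := by
  have hterm (c : ι → K) : r ^ #{x | c x ≠ 0} = ∏ x, if c x ≠ 0 then r else 1 := by
    rw [← prod_filter, prod_const]
  have hfactor : ∑ a : K, (if a ≠ 0 then r else 1) = 1 + (Fintype.card K - 1) • r := by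
    rw [sum_ite, sum_const, sum_const]
    simp [filter_ne', filter_eq', card_erase_of_mem, add_comm]
  rw [← hfactor, ← card_univ, ← prod_const, Fintype.prod_sum]
  simp_rw [hterm]

theorem sum_ne_zero_inv_sq_pow_card_support_lt_one
    (hK : (1 + (Fintype.card K : ℝ)⁻¹) ^ Fintype.card ι < 2) :
    ∑ c ∈ univ.erase (0 : ι → K), ((Fintype.card K : ℝ) ^ 2)⁻¹ ^ #{x | c x ≠ 0} < 1 := by
  have hq : (0 : ℝ) < Fintype.card K := by exact_mod_cast Fintype.card_pos
  have hfactor :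
      1 + (Fintype.card K - 1) • ((Fintype.card K : ℝ) ^ 2)⁻¹ ≤ 1 + (Fintype.card K : ℝ)⁻¹ := by
    rw [nsmul_eq_mul, Nat.cast_pred Fintype.card_pos]
    field_simp
    linarith
  have htotal := sum_pow_card_support (ι := ι) (K := K) ((Fintype.card K : ℝ) ^ 2)⁻¹
  have hzero : ((Fintype.card K : ℝ) ^ 2)⁻¹ ^ #{x | (0 : ι → K) x ≠ 0} = 1 := by simp
  rw [← add_sum_erase _ _ (mem_univ 0), hzero] at htotal
  have := pow_le_pow_left₀ (by positivity) hfactor (Fintype.card ι)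
  linarith

end Counting

section WeightMatrix

variable {ι κ σ K : Type*} [Fintype ι] [Fintype κ] [DecidableEq σ] [Field K]

def neighbors (Γ : ι × κ → σ) (S : Finset ι) : Finset σ :=
  (S ×ˢ univ).image Γ

/-- The matrix `A_{Γ,Π}` for `Π = W`, as the family of its rows. -/
def weightMatrix (Γ : ι × κ → σ) (W : ι × κ → K) : ι → σ → K :=
  fun x y => ∑ j, if Γ (x, j) = y then W (x, j) else 0

def rowCombination (Γ : ι × κ → σ) (c : ι → K) : (ι × κ → K) →ₗ[K] (σ → K) where
  toFun W := ∑ x, c x • weightMatrix Γ W x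
  map_add' W W' := by
    ext y
    simp only [Finset.sum_apply, Pi.add_apply, Pi.smul_apply, smul_eq_mul, weightMatrix,
      ← sum_add_distrib, ← mul_add, ite_add_ite, add_zero]
  map_smul' a W := by
    ext y
    simp [weightMatrix, mul_sum, mul_left_comm]

theorem rowCombination_apply (Γ : ι × κ → σ) (c : ι → K) (W : ι × κ → K) :
    rowCombination Γ c W = ∑ x, c x • weightMatrix Γ W x :=
  rfl

theorem rowCombination_single [DecidableEq ι] [DecidableEq κ] (Γ : ι × κ → σ) (c : ι → K)
    (z : ι × κ) (a : K) :
    rowCombination Γ c (Pi.single z a) = Pi.single (Γ z) (c z.1 * a) := by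
  ext y
  rcases z with ⟨x₀, j₀⟩
  simp only [rowCombination, weightMatrix, LinearMap.coe_mk, AddHom.coe_mk, Finset.sum_apply,
    Pi.smul_apply, smul_eq_mul, Pi.single_apply, Prod.mk.injEq]
  rw [Fintype.sum_eq_single x₀ fun x hx => by simp [hx],
    Fintype.sum_eq_single j₀ fun j hj => by simp [hj]]
  simp [eq_comm]

theorem card_neighbors_support_le_finrank_range [DecidableEq K] (Γ : ι × κ → σ) (c : ι → K) :
    #(neighbors Γ {x | c x ≠ 0}) ≤ Module.finrank K (LinearMap.range (rowCombination Γ c)) := by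
  classical
  set T := neighbors Γ {x | c x ≠ 0}
  have hsingle : ∀ y ∈ T, Pi.single y 1 ∈ LinearMap.range (rowCombination Γ c) := by
    intro y hy
    obtain ⟨z, hz, rfl⟩ := mem_image.mp hy
    have hcz : c z.1 ≠ 0 := by simpa using (mem_product.mp hz).1
    exact ⟨Pi.single z (c z.1)⁻¹, by rw [rowCombination_single, mul_inv_cancel₀ hcz]⟩
  let e : T → σ → K := fun y => Pi.single y.1 1
  have he : LinearIndependent K e :=
    (Pi.linearIndependent_single_one σ K).comp _ Subtype.val_injective
  calc #T = Module.finrank K (Submodule.span K (Set.range e)) := by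
        rw [finrank_span_eq_card he, Fintype.card_coe]
    _ ≤ _ := Submodule.finrank_mono <| Submodule.span_le.mpr <| by
        rintro _ ⟨y, rfl⟩
        exact hsingle y y.2

theorem natCard_ker_rowCombination_mul_le [Finite K] [DecidableEq K] (Γ : ι × κ → σ)
    (c : ι → K) :
    Nat.card (LinearMap.ker (rowCombination Γ c)) * Nat.card K ^ #(neighbors Γ {x | c x ≠ 0})
      ≤ Nat.card (ι × κ → K) := by
  rw [Module.natCard_eq_pow_finrank (K := K) (V := ι × κ → K),
    ← (rowCombination Γ c).finrank_range_add_finrank_ker, Module.natCard_eq_pow_finrank (K := K),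
    add_comm, pow_add]
  exact Nat.mul_le_mul_left _ (Nat.pow_le_pow_right Nat.card_pos
    (card_neighbors_support_le_finrank_range Γ c))

end WeightMatrix

theorem one_add_inv_pow_lt_two {q : ℝ} (hq : 0 < q) {u : ℕ} (h : 2 * Real.exp 1 * u ≤ q) :
    (1 + q⁻¹) ^ u < 2 := by
  have hlog : 1 / (2 * Real.exp 1) < Real.log 2 := by
    have := Real.exp_one_gt_d9
    have := Real.log_two_gt_d9
    rw [div_lt_iff₀ (by positivity)]
    nlinarith
  calc (1 + q⁻¹) ^ u ≤ Real.exp q⁻¹ ^ u := by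
        gcongr
        linarith [Real.add_one_le_exp q⁻¹]
    _ = Real.exp (u / q) := by rw [← Real.exp_nat_mul, div_eq_mul_inv]
    _ ≤ Real.exp (1 / (2 * Real.exp 1)) := by
        refine Real.exp_le_exp.mpr ?_
        rw [div_le_div_iff₀ hq (by positivity)]
        linarith
    _ < Real.exp (Real.log 2) := Real.exp_lt_exp.mpr hlog
    _ = 2 := Real.exp_log two_pos

section Existence

variable {ι κ σ K : Type*} [Fintype ι] [Fintype κ] [DecidableEq σ] [Field K] [Fintype K]
  [DecidableEq K]

theorem exists_weight_sum_smul_ne_zero (Γ : ι × κ → σ) (n : ℕ)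
    (hexp : ∀ S : Finset ι, S.Nonempty → #S ≤ n → 2 * #S ≤ #(neighbors Γ S))
    (hK : (1 + (Fintype.card K : ℝ)⁻¹) ^ Fintype.card ι < 2) :
    ∃ W : ι × κ → K, ∀ c : ι → K, c ≠ 0 → #{x | c x ≠ 0} ≤ n →
      ∑ x, c x • weightMatrix Γ W x ≠ 0 := by
  classical
  set q := Fintype.card K
  set N := Fintype.card (ι × κ → K)
  let C : Finset (ι → K) := {c | c ≠ 0 ∧ #{x | c x ≠ 0} ≤ n}
  let bad (c : ι → K) : Finset (ι × κ → K) := {W | W ∈ LinearMap.ker (rowCombination Γ c)}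
  suffices hlt : ∑ c ∈ C, #(bad c) < N by
    obtain ⟨W, -, hW⟩ := exists_mem_notMem_of_card_lt_card (card_biUnion_le.trans_lt hlt)
    refine ⟨W, fun c hc hcn hzero => hW (mem_biUnion.mpr ⟨c, ?_, ?_⟩)⟩
    · simp [C, hc, hcn]
    · exact mem_filter.mpr ⟨mem_univ W, LinearMap.mem_ker.mpr hzero⟩
  have hbad : ∀ c ∈ C, (#(bad c) : ℝ) ≤ N * ((q : ℝ) ^ 2)⁻¹ ^ #{x | c x ≠ 0} := by
    intro c hc
    obtain ⟨hc0, hcn⟩ := (mem_filter.mp hc).2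
    have hS : ({x | c x ≠ 0} : Finset ι).Nonempty := by
      obtain ⟨x, hx⟩ := Function.ne_iff.mp hc0
      exact ⟨x, by simpa using hx⟩
    have hker : #(bad c) * (q ^ 2) ^ #{x | c x ≠ 0} ≤ N := by
      have := natCard_ker_rowCombination_mul_le Γ c
      rw [Nat.card_eq_fintype_card, Fintype.card_subtype, Nat.card_eq_fintype_card,
        Nat.card_eq_fintype_card] at this
      refine le_trans (Nat.mul_le_mul_left _ ?_) this
      rw [← pow_mul]
      exact Nat.pow_le_pow_right Fintype.card_pos (hexp _ hS hcn)
    rw [inv_pow, ← div_eq_mul_inv, le_div_iff₀ (by positivity)]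
    exact_mod_cast hker
  suffices hlt : ((∑ c ∈ C, #(bad c) : ℕ) : ℝ) < N by exact_mod_cast hlt
  calc ((∑ c ∈ C, #(bad c) : ℕ) : ℝ)
        ≤ ∑ c ∈ univ.erase (0 : ι → K), N * ((q : ℝ) ^ 2)⁻¹ ^ #{x | c x ≠ 0} := by
        push_cast
        refine (sum_le_sum hbad).trans
          (sum_le_sum_of_subset_of_nonneg ?_ fun _ _ _ => by positivity)
        intro c hc
        simpa [C] using (mem_filter.mp hc).2.1
    _ < N := by
        rw [← mul_sum]
        exact mul_lt_of_lt_one_right (by exact_mod_cast Fintype.card_pos)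
          (sum_ne_zero_inv_sq_pow_card_support_lt_one hK)

end Existence

theorem stmt3_general (u t s n p : ℕ) (hp : p.Prime) (hpu : 2 * Real.exp 1 * u ≤ p)
    (Γ : Fin u × Fin t → Fin s)
    (hexp : ∀ S : Finset (Fin u), 1 ≤ S.card → S.card ≤ n →
      2 * S.card ≤ ((S ×ˢ (Finset.univ : Finset (Fin t))).image Γ).card) :
    ∃ W : Fin u × Fin t → ZMod p,
      ∀ X : Finset (Fin u), X.card ≤ n →
        LinearIndependent (ZMod p)
          (fun x : X => (fun y : Fin s =>
            ∑ j : Fin t, if Γ (x.1, j) = y then W (x.1, j) else 0)) := by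
  have : Fact p.Prime := ⟨hp⟩
  have hK : (1 + (Fintype.card (ZMod p) : ℝ)⁻¹) ^ Fintype.card (Fin u) < 2 := by
    rw [ZMod.card, Fintype.card_fin]
    exact one_add_inv_pow_lt_two (by exact_mod_cast hp.pos) hpu
  obtain ⟨W, hW⟩ := exists_weight_sum_smul_ne_zero Γ n
    (fun S hS hSn => hexp S (one_le_card.mpr hS) hSn) hK
  exact ⟨W, fun X hX => linearIndepOn_of_sum_smul_ne_zero hW hX⟩

/-- For a `(≤ n, 2)`-expander `Γ` and a prime `p ≥ 2e·u`, there is a weight function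
`Π` making `(Γ, Π)` useful: every set of at most `n` rows of the matrix `A_{Γ,Π}` is
linearly independent over `𝔽_p`. -/
theorem stmt3 (u t s n p : ℕ) (hp : p.Prime) [NeZero p] (hpu : 2 * Real.exp 1 * u ≤ p)
    (Γ : Fin u × Fin t → Fin s)
    (hexp : ∀ S : Finset (Fin u), 1 ≤ S.card → S.card ≤ n →
      2 * S.card ≤ ((S ×ˢ (Finset.univ : Finset (Fin t))).image Γ).card) :
    ∃ W : Fin u × Fin t → ZMod p,
      ∀ X : Finset (Fin u), X.card ≤ n →
        LinearIndependent (ZMod p)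
          (fun x : X => (fun y : Fin s =>
            ∑ j : Fin t, if Γ (x.1, j) = y then W (x.1, j) else 0)) :=
  stmt3_general u t s n p hp hpu Γ hexp
end

section
/- For integers u ≥ n ≥ 1, s ≥ 2n, t ≥ 1 with t ≥ lg(u/n)/lg(s/n) + 5, the following holds: Σ_{i=1}^{n} C(u,i)·C(s,i)·(i/s)^{t·i} < 1, where C denotes the binomial coefficient. -/
open Finset Real

private lemma pow_self_le_three_pow_mul_factorial :
    ∀ k : ℕ, 1 ≤ k → (k : ℝ) ^ k ≤ 3 ^ (k - 1) * (Nat.factorial k : ℝ) := by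
  intro k
  induction k with
  | zero => omega
  | succ m ih =>
    intro _
    rcases Nat.eq_zero_or_pos m with hm | hm
    · subst hm; norm_num
    · have ih' := ih hm
      have hm0 : (0:ℝ) < m := by exact_mod_cast hm
      have hexp3 : Real.exp 1 ≤ 3 := by
        have := Real.exp_one_lt_d9; linarith
      have hkey : ((m:ℝ) + 1) ^ m ≤ 3 * (m:ℝ) ^ m := by
        have h1 : (m:ℝ) + 1 ≤ Real.exp (1 / m) * m := by
          have := Real.add_one_le_exp (1 / (m:ℝ))
          have := mul_le_mul_of_nonneg_right this hm0.le
          calc (m:ℝ) + 1 = (1/(m:ℝ) + 1) * m := by field_simp; ring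
            _ ≤ Real.exp (1/(m:ℝ)) * m := this
        calc ((m:ℝ)+1)^m ≤ (Real.exp (1/m) * m) ^ m := by
              apply pow_le_pow_left₀ (by positivity) h1
          _ = Real.exp (1/m) ^ m * (m:ℝ)^m := by rw [mul_pow]
          _ = Real.exp ((m:ℕ) * (1/(m:ℝ))) * (m:ℝ)^m := by rw [Real.exp_nat_mul]
          _ = Real.exp 1 * (m:ℝ)^m := by
              rw [mul_one_div, div_self (by positivity : (m:ℝ) ≠ 0)]
          _ ≤ 3 * (m:ℝ)^m := by
              apply mul_le_mul_of_nonneg_right hexp3 (by positivity)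
      have hfac : ((m+1).factorial : ℝ) = ((m:ℝ)+1) * (m.factorial : ℝ) := by
        rw [Nat.factorial_succ]; push_cast; ring
      have h3 : (3:ℝ) ^ (m + 1 - 1) = 3 * 3 ^ (m - 1) := by
        rw [show m + 1 - 1 = (m - 1) + 1 by omega, pow_succ]; ring
      push_cast
      calc ((m:ℝ)+1) ^ (m+1) = ((m:ℝ)+1) * ((m:ℝ)+1)^m := by rw [pow_succ]; ring
        _ ≤ ((m:ℝ)+1) * (3 * (m:ℝ)^m) := by
            apply mul_le_mul_of_nonneg_left hkey (by positivity)
        _ ≤ ((m:ℝ)+1) * (3 * (3 ^ (m-1) * (m.factorial : ℝ))) := by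
            apply mul_le_mul_of_nonneg_left (by
              apply mul_le_mul_of_nonneg_left ih' (by norm_num)) (by positivity)
        _ = 3 ^ (m + 1 - 1) * ((m+1).factorial : ℝ) := by
            rw [h3, hfac]; ring

private lemma choose_bound (m i : ℕ) (hi : 1 ≤ i) :
    (m.choose i : ℝ) ≤ (m:ℝ) ^ i * 3 ^ (i - 1) / (i:ℝ) ^ i := by
  have hi0 : (0:ℝ) < i := by exact_mod_cast hi
  have hfacpos : (0:ℝ) < (i.factorial : ℝ) := by exact_mod_cast i.factorial_pos
  have h1 : (m.choose i : ℝ) ≤ (m:ℝ) ^ i / (i.factorial : ℝ) := by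
    have := Nat.choose_le_pow_div (α := ℝ) i m
    push_cast at this ⊢
    exact this
  have h2 : (i:ℝ) ^ i / 3 ^ (i - 1) ≤ (i.factorial : ℝ) := by
    rw [div_le_iff₀ (by positivity)]
    calc (i:ℝ)^i ≤ 3 ^ (i-1) * (i.factorial : ℝ) :=
          pow_self_le_three_pow_mul_factorial i hi
      _ = (i.factorial : ℝ) * 3 ^ (i-1) := by ring
  calc (m.choose i : ℝ) ≤ (m:ℝ) ^ i / (i.factorial : ℝ) := h1
    _ ≤ (m:ℝ) ^ i / ((i:ℝ) ^ i / 3 ^ (i-1)) := by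
        gcongr
    _ = (m:ℝ) ^ i * 3 ^ (i-1) / (i:ℝ) ^ i := by
        rw [div_div_eq_mul_div]

open Finset in
/-- Union-bound computation for `(≤ n)`-non-contractive expanders: for `u ≥ n ≥ 1`,
`s ≥ 2n` and `t ≥ lg(u/n)/lg(s/n) + 5`, `∑_{i=1}^n C(u,i)·C(s,i)·(i/s)^{ti} < 1`. -/
theorem stmt6 (u n s t : ℕ) (hn : 1 ≤ n) (hun : n ≤ u) (hs : 2 * n ≤ s) (ht : 1 ≤ t)
    (ht' : Real.logb 2 ((u : ℝ) / n) / Real.logb 2 ((s : ℝ) / n) + 5 ≤ t) :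
    ∑ i ∈ Finset.Icc 1 n,
      (u.choose i : ℝ) * (s.choose i : ℝ) * ((i : ℝ) / s) ^ (t * i) < 1 := by
  have hN : (0:ℝ) < n := by exact_mod_cast hn
  have hs2 : 2 ≤ s := le_trans (by omega) hs
  have hS : (0:ℝ) < s := by exact_mod_cast lt_of_lt_of_le (by norm_num) hs2
  have hU : (0:ℝ) < u := lt_of_lt_of_le hN (by exact_mod_cast hun)
  have hSN : (2:ℝ) ≤ (s:ℝ) / n := by
    rw [le_div_iff₀ hN]
    exact_mod_cast hs
  have hUN : (1:ℝ) ≤ (u:ℝ) / n := by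
    rw [le_div_iff₀ hN, one_mul]
    exact_mod_cast hun
  set Ls := Real.logb 2 ((s:ℝ)/n) with hLsdef
  set Lu := Real.logb 2 ((u:ℝ)/n) with hLudef
  have hLs : 1 ≤ Ls := by
    rw [hLsdef, show (1:ℝ) = Real.logb 2 2 from (Real.logb_self_eq_one (by norm_num)).symm]
    exact Real.logb_le_logb_of_le (by norm_num) (by norm_num) hSN
  have hLu : 0 ≤ Lu := Real.logb_nonneg (by norm_num) hUN
  have hLs0 : (0:ℝ) < Ls := lt_of_lt_of_le one_pos hLs
  have ht5 : 5 ≤ t := by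
    have h0 : 0 ≤ Lu / Ls := div_nonneg hLu hLs0.le
    have : (5:ℝ) ≤ t := by linarith
    exact_mod_cast this
  obtain ⟨T, rfl⟩ : ∃ T, t = T + 5 := ⟨t - 5, by omega⟩
  -- log inequality
  have hTLs : Lu + 4 ≤ ((T:ℝ) + 4) * Ls := by
    have h1 : Lu / Ls ≤ (T:ℝ) := by push_cast at ht'; linarith
    have h2 : Lu ≤ (T:ℝ) * Ls := by
      rw [div_le_iff₀ hLs0] at h1; exact h1
    nlinarith
  have h16 : 16 * ((u:ℝ)/n) ≤ ((s:ℝ)/n) ^ (T+4) := by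
    have e1 : ((s:ℝ)/n) ^ (T+4) = (2:ℝ) ^ ((((T:ℕ)+4 : ℕ):ℝ) * Ls) := by
      rw [← Real.rpow_logb (show (0:ℝ) < 2 by norm_num) (show (2:ℝ) ≠ 1 by norm_num)
        (by positivity : (0:ℝ) < (s:ℝ)/n)]
      rw [← hLsdef, ← Real.rpow_natCast ((2:ℝ) ^ Ls) (T+4), ← Real.rpow_mul (by norm_num),
        mul_comm]
    have e2 : (2:ℝ) ^ (Lu + 4 : ℝ) ≤ (2:ℝ) ^ ((((T:ℕ)+4 : ℕ):ℝ) * Ls) := by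
      apply (Real.rpow_le_rpow_left_iff (by norm_num)).mpr
      push_cast
      linarith
    have e3 : (2:ℝ) ^ (Lu + 4 : ℝ) = ((u:ℝ)/n) * 16 := by
      rw [Real.rpow_add (by norm_num : (0:ℝ) < 2), hLudef,
        Real.rpow_logb (show (0:ℝ) < 2 by norm_num) (show (2:ℝ) ≠ 1 by norm_num)
          (by positivity : (0:ℝ) < (u:ℝ)/n),
        show ((2:ℝ) ^ (4:ℝ)) = 16 by
          rw [show (4:ℝ) = ((4:ℕ):ℝ) by norm_num, Real.rpow_natCast]; norm_num]
    rw [e1]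
    calc 16 * ((u:ℝ)/n) = (2:ℝ) ^ (Lu + 4 : ℝ) := by rw [e3]; ring
      _ ≤ _ := e2
  have h16' : 16 * (u:ℝ) * (n:ℝ) ^ (T+3) ≤ (s:ℝ) ^ (T+4) := by
    have h0 := mul_le_mul_of_nonneg_right h16 (pow_nonneg hN.le (T+4))
    have e : ((s:ℝ)/n) ^ (T+4) * (n:ℝ) ^ (T+4) = (s:ℝ) ^ (T+4) := by
      rw [div_pow, div_mul_cancel₀]
      exact (pow_pos hN _).ne'
    have e2 : 16 * ((u:ℝ)/n) * (n:ℝ) ^ (T+4) = 16 * (u:ℝ) * (n:ℝ) ^ (T+3) := by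
      rw [show T+4 = (T+3)+1 by omega, pow_succ]
      field_simp
    rw [e, e2] at h0
    exact h0
  have hD : (u:ℝ) * s * (n:ℝ) ^ (T+3) / (s:ℝ) ^ (T+5) ≤ 1/16 := by
    rw [div_le_iff₀ (by positivity)]
    have := mul_le_mul_of_nonneg_right h16' hS.le
    have e : (s:ℝ) ^ (T+4) * s = (s:ℝ) ^ (T+5) := by
      rw [← pow_succ, show T+4+1 = T+5 from by omega]
    nlinarith
  -- per-term bound
  have hterm : ∀ i ∈ Finset.Icc 1 n,
      (u.choose i : ℝ) * (s.choose i : ℝ) * ((i : ℝ) / s) ^ ((T+5) * i)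
        ≤ (1/9) * (9/16 : ℝ) ^ i := by
    intro i hi
    rw [Finset.mem_Icc] at hi
    obtain ⟨hi1, hin⟩ := hi
    have hi0 : (0:ℝ) < i := by exact_mod_cast hi1
    have hiN : (i:ℝ) ≤ n := by exact_mod_cast hin
    set q : ℝ := (u:ℝ)/i * ((s:ℝ)/i * ((i:ℝ)/s) ^ (T+5)) with hqdef
    have hq0 : 0 ≤ q := by positivity
    have hqval : q = (u:ℝ) * s * (i:ℝ) ^ (T+3) / (s:ℝ) ^ (T+5) := by
      rw [hqdef, div_pow, show T+5 = (T+3)+2 by omega, pow_add]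
      field_simp
    have hq16 : q ≤ 1/16 := by
      refine le_trans ?_ hD
      rw [hqval]
      gcongr
    have step1 : (u.choose i : ℝ) * (s.choose i : ℝ) * ((i : ℝ) / s) ^ ((T+5) * i)
        ≤ ((u:ℝ) ^ i * 3 ^ (i-1) / (i:ℝ) ^ i) * ((s:ℝ) ^ i * 3 ^ (i-1) / (i:ℝ) ^ i)
          * ((i : ℝ) / s) ^ ((T+5) * i) := by
      have hb1 := choose_bound u i hi1
      have hb2 := choose_bound s i hi1
      have hc1 : (0:ℝ) ≤ (u.choose i : ℝ) := by positivity
      have hc2 : (0:ℝ) ≤ (s.choose i : ℝ) := by positivity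
      have hpow : (0:ℝ) ≤ ((i : ℝ) / s) ^ ((T+5) * i) := by positivity
      gcongr
    have step2 : ((u:ℝ) ^ i * 3 ^ (i-1) / (i:ℝ) ^ i) * ((s:ℝ) ^ i * 3 ^ (i-1) / (i:ℝ) ^ i)
          * ((i : ℝ) / s) ^ ((T+5) * i) = 9 ^ (i-1) * q ^ i := by
      rw [hqdef, pow_mul' ((i:ℝ)/s) (T+5) i]
      rw [mul_pow ((u:ℝ)/i), mul_pow ((s:ℝ)/i), div_pow (u:ℝ), div_pow (s:ℝ)]
      rw [show (9:ℝ) ^ (i-1) = 3 ^ (i-1) * 3 ^ (i-1) by rw [← mul_pow]; norm_num]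
      ring
    have step3 : (9:ℝ) ^ (i-1) * q ^ i ≤ 9 ^ (i-1) * (1/16 : ℝ) ^ i := by
      gcongr
    have step4 : (9:ℝ) ^ (i-1) * (1/16 : ℝ) ^ i = (1/9) * (9/16 : ℝ) ^ i := by
      obtain ⟨j, rfl⟩ : ∃ j, i = j + 1 := ⟨i - 1, by omega⟩
      rw [show j + 1 - 1 = j by omega, pow_succ, pow_succ,
        show (9/16 : ℝ) ^ j = 9 ^ j * (1/16 : ℝ) ^ j by rw [← mul_pow]; norm_num]
      ring
    calc (u.choose i : ℝ) * (s.choose i : ℝ) * ((i : ℝ) / s) ^ ((T+5) * i)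
        ≤ _ := step1
      _ = 9 ^ (i-1) * q ^ i := step2
      _ ≤ 9 ^ (i-1) * (1/16 : ℝ) ^ i := step3
      _ = (1/9) * (9/16 : ℝ) ^ i := step4
  -- sum the geometric bound
  have hsum : ∑ i ∈ Finset.Icc 1 n, (1/9 : ℝ) * (9/16 : ℝ) ^ i < 1 := by
    have hsub : ∑ i ∈ Finset.Icc 1 n, (9/16 : ℝ) ^ i
        ≤ ∑ i ∈ Finset.range (n+1), (9/16 : ℝ) ^ i := by
      apply Finset.sum_le_sum_of_subset_of_nonneg
      · intro i hi
        rw [Finset.mem_Icc] at hi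
        rw [Finset.mem_range]
        omega
      · intro i _ _
        positivity
    have hgeom : ∑ i ∈ Finset.range (n+1), (9/16 : ℝ) ^ i
        = ((9/16 : ℝ) ^ (n+1) - 1) / ((9/16 : ℝ) - 1) := geom_sum_eq (by norm_num) _
    have hpow0 : (0:ℝ) ≤ (9/16 : ℝ) ^ (n+1) := by positivity
    have hle : ((9/16 : ℝ) ^ (n+1) - 1) / ((9/16 : ℝ) - 1) ≤ 16/7 := by
      rw [div_le_iff_of_neg (by norm_num)]
      nlinarith
    rw [← Finset.mul_sum]
    calc (1/9 : ℝ) * ∑ i ∈ Finset.Icc 1 n, (9/16 : ℝ) ^ i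
        ≤ (1/9 : ℝ) * (16/7) := by
          apply mul_le_mul_of_nonneg_left _ (by norm_num)
          calc ∑ i ∈ Finset.Icc 1 n, (9/16 : ℝ) ^ i ≤ _ := hsub
            _ = _ := hgeom
            _ ≤ 16/7 := hle
      _ < 1 := by norm_num
  exact lt_of_le_of_lt (Finset.sum_le_sum hterm) hsum
end

section
/- Let Γ : [u] × [t] → [s] be a (≤ n, 2)-expander, let Π : [u] × [t] → 𝔽_p with each value drawn uniformly and independently from 𝔽_p (p prime), and let A = A_{Γ,Π} be the corresponding u × s matrix. Fix β ∈ 𝔽_p^u with 1 ≤ ‖β‖_0 ≤ n, where ‖β‖_0 is the number of nonzero coordinates. Then Pr[β A = 0] ≤ p^{−2‖β‖_0}. -/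
/-- For a `(≤ n, 2)`-expander `Γ`, uniformly random weights `Π`, and a fixed `β` with
`1 ≤ ‖β‖₀ ≤ n`, the probability that `β · A_{Γ,Π} = 0` is at most `p^{-2‖β‖₀}`. -/
theorem stmt9 (u t s n p : ℕ) (hp : p.Prime) [NeZero p]
    (Γ : Fin u × Fin t → Fin s)
    (hexp : ∀ S : Finset (Fin u), S.card ≤ n →
      2 * S.card ≤ ((S ×ˢ (Finset.univ : Finset (Fin t))).image Γ).card)
    (β : Fin u → ZMod p)
    (hβ1 : 1 ≤ (Finset.univ.filter (fun x : Fin u => β x ≠ 0)).card)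
    (hβn : (Finset.univ.filter (fun x : Fin u => β x ≠ 0)).card ≤ n) :
    ((Finset.univ.filter (fun W : Fin u × Fin t → ZMod p =>
        Matrix.vecMul β
          (Matrix.of fun x y => ∑ j : Fin t, if Γ (x, j) = y then W (x, j) else 0)
          = 0)).card : ℝ)
      * (p : ℝ) ^ (2 * (Finset.univ.filter (fun x : Fin u => β x ≠ 0)).card)
      ≤ (Fintype.card (Fin u × Fin t → ZMod p) : ℝ) := by
  classical
  haveI := Fact.mk hp
  set S := Finset.univ.filter (fun x : Fin u => β x ≠ 0) with hS
  set k := S.card with hk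
  set T := (S ×ˢ (Finset.univ : Finset (Fin t))).image Γ with hT
  have hTcard : 2 * k ≤ T.card := hexp S hβn
  obtain ⟨T', hT'sub, hT'card⟩ := Finset.exists_subset_card_eq hTcard
  -- a default element
  have hne : (S ×ˢ (Finset.univ : Finset (Fin t))).Nonempty := by
    rw [← Finset.image_nonempty (f := Γ), ← hT, ← Finset.card_pos]
    omega
  obtain ⟨z0, hz0⟩ := hne
  -- choose preimages
  have hch : ∀ y : Fin s, ∃ z : Fin u × Fin t,
      y ∈ T' → z ∈ S ×ˢ (Finset.univ : Finset (Fin t)) ∧ Γ z = y := by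
    intro y
    by_cases hy : y ∈ T'
    · obtain ⟨z, hz, hzy⟩ := Finset.mem_image.mp (hT'sub hy)
      exact ⟨z, fun _ => ⟨hz, hzy⟩⟩
    · exact ⟨z0, fun h => absurd h hy⟩
  choose c hc using hch
  have hcinj : Set.InjOn c T' := by
    intro y hy y' hy' h
    rw [← (hc y hy).2, ← (hc y' hy').2, h]
  set C' := T'.image c with hC'
  have hC'card : C'.card = 2 * k := by
    rw [hC', Finset.card_image_of_injOn hcinj, hT'card]
  -- members of C' mapping to y under Γ are exactly c y (for y ∈ T')
  have hC'mem : ∀ z ∈ C', ∃ y ∈ T', z = c y ∧ Γ z = y := by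
    intro z hz
    obtain ⟨y, hy, rfl⟩ := Finset.mem_image.mp hz
    exact ⟨y, hy, rfl, (hc y hy).2⟩
  set Sol := Finset.univ.filter (fun W : Fin u × Fin t → ZMod p =>
        Matrix.vecMul β
          (Matrix.of fun x y => ∑ j : Fin t, if Γ (x, j) = y then W (x, j) else 0)
          = 0) with hSol
  set F0 := Finset.univ.filter
      (fun f : Fin u × Fin t → ZMod p => ∀ z ∉ C', f z = 0) with hF0def
  -- the column sums
  have hsum : ∀ V ∈ Sol, ∀ y : Fin s,
      ∑ z ∈ Finset.univ.filter (fun z => Γ z = y), β z.1 * V z = 0 := by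
    intro V hV y
    have h0 := congrFun ((Finset.mem_filter.mp hV).2) y
    have h1 : Matrix.vecMul β
        (Matrix.of fun x y => ∑ j : Fin t, if Γ (x, j) = y then V (x, j) else 0) y
        = ∑ z ∈ Finset.univ.filter (fun z => Γ z = y), β z.1 * V z := by
      rw [Finset.sum_filter]
      simp only [Matrix.vecMul, dotProduct, Matrix.of_apply,
        Finset.mul_sum, mul_ite, mul_zero]
      rw [← Finset.sum_product']
      rfl
    rw [h1] at h0
    exact h0
  have hF0card : F0.card = p ^ (2 * k) := by
    have hcardfun : Fintype.card ({x // x ∈ C'} → ZMod p) = p ^ (2 * k) := by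
      rw [Fintype.card_fun, ZMod.card, Fintype.card_coe, hC'card]
    rw [← hcardfun, ← Finset.card_univ]
    apply Finset.card_nbij' (fun f => fun z : {x // x ∈ C'} => f z.1)
      (fun g => fun z => if h : z ∈ C' then g ⟨z, h⟩ else 0)
    · intro f _
      exact Finset.mem_univ _
    · intro g _
      simp only [hF0def, Finset.mem_coe, Finset.mem_filter, Finset.mem_univ, true_and]
      intro z hz
      rw [dif_neg hz]
    · intro f hf
      funext z
      by_cases hz : z ∈ C'
      · dsimp only; rw [dif_pos hz]
      · dsimp only; rw [dif_neg hz, (Finset.mem_filter.mp hf).2 z hz]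
    · intro g _
      funext z
      simp [z.2]
  have key : Sol.card * p ^ (2 * k) ≤ Fintype.card (Fin u × Fin t → ZMod p) := by
    rw [← hF0card, ← Finset.card_product, ← Finset.card_univ]
    apply Finset.card_le_card_of_injOn
      (fun Wf : (Fin u × Fin t → ZMod p) × (Fin u × Fin t → ZMod p) =>
        fun z => if z ∈ C' then Wf.2 z else Wf.1 z)
      (fun _ _ => Finset.mem_univ _)
    rintro ⟨W, f⟩ hWf ⟨W', f'⟩ hWf' heq
    simp only [Finset.mem_coe, Finset.mem_product] at hWf hWf'
    have hfmem : ∀ z ∉ C', f z = 0 := (Finset.mem_filter.mp hWf.2).2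
    have hfmem' : ∀ z ∉ C', f' z = 0 := (Finset.mem_filter.mp hWf'.2).2
    have heq' : ∀ z, (if z ∈ C' then f z else W z) = (if z ∈ C' then f' z else W' z) :=
      fun z => congrFun heq z
    have hfeq : f = f' := by
      funext z
      by_cases hz : z ∈ C'
      · have := heq' z; rwa [if_pos hz, if_pos hz] at this
      · rw [hfmem z hz, hfmem' z hz]
    have hWoff : ∀ z ∉ C', W z = W' z := by
      intro z hz
      have := heq' z; rwa [if_neg hz, if_neg hz] at this
    have hWeq : W = W' := by
      funext z
      by_cases hz : z ∈ C'
      · obtain ⟨y, hy, rfl, hΓ⟩ := hC'mem z hz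
        -- use the column y equation
        have hcy := (hc y hy).1
        have hβcy : β (c y).1 ≠ 0 := by
          have := (Finset.mem_product.mp hcy).1
          rw [hS] at this
          exact (Finset.mem_filter.mp this).2
        have hmem : c y ∈ Finset.univ.filter (fun z => Γ z = y) := by
          simp [hΓ]
        have e1 := hsum W hWf.1 y
        have e2 := hsum W' hWf'.1 y
        rw [← Finset.add_sum_erase _ _ hmem] at e1 e2
        have hrest : ∀ z' ∈ (Finset.univ.filter (fun z => Γ z = y)).erase (c y),
            W z' = W' z' := by
          intro z' hz'
          apply hWoff
          intro hz'C
          obtain ⟨y', hy', rfl, hΓ'⟩ := hC'mem z' hz'C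
          have hΓz' : Γ (c y') = y := (Finset.mem_filter.mp (Finset.mem_of_mem_erase hz')).2
          have : y' = y := by rw [← hΓ', hΓz']
          subst this
          exact (Finset.ne_of_mem_erase hz') rfl
        have hsame : ∑ z' ∈ (Finset.univ.filter (fun z => Γ z = y)).erase (c y), β z'.1 * W z'
            = ∑ z' ∈ (Finset.univ.filter (fun z => Γ z = y)).erase (c y), β z'.1 * W' z' :=
          Finset.sum_congr rfl (fun z' hz' => by rw [hrest z' hz'])
        rw [hsame] at e1
        exact mul_left_cancel₀ hβcy (add_right_cancel (e1.trans e2.symm))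
      · exact hWoff z hz
    rw [hfeq, hWeq]
  calc ((Sol.card : ℝ)) * (p : ℝ) ^ (2 * k)
      = ((Sol.card * p ^ (2 * k) : ℕ) : ℝ) := by push_cast; ring
    _ ≤ (Fintype.card (Fin u × Fin t → ZMod p) : ℝ) := by exact_mod_cast key
end

section
/- Let p : [u] → Finset [s] assign to each query x a set of probed cells with |p(x)| ≤ t. For any q with t ≤ q ≤ s, there exists a set C ⊆ [s] with |C| = q such that the number of x ∈ [u] with p(x) ⊆ C is at least u · C(s−t, q−t) / C(s, q). -/
/-!
Double count the pairs `(x, C)` with `C` a `q`-subset of `[s]` and `p x ⊆ C`. A fixed `x` lies in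
`C(s - |p x|, q - |p x|) ≥ C(s - t, q - t)` such pairs, so some of the `C(s, q)` sets `C` takes part
in at least the average number `u · C(s - t, q - t) / C(s, q)` of them.
-/

open Finset

theorem Nat.choose_le_choose_add_add (n k d : ℕ) : n.choose k ≤ (n + d).choose (k + d) := by
  induction d with
  | zero => rfl
  | succ d ih =>
    rw [← Nat.add_assoc, ← Nat.add_assoc, Nat.choose_succ_succ']
    exact ih.trans (Nat.le_add_right _ _)

theorem Nat.choose_sub_le_choose_sub {n k a b : ℕ} (hab : a ≤ b) (hbk : b ≤ k) (hkn : k ≤ n) :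
    (n - b).choose (k - b) ≤ (n - a).choose (k - a) := by
  obtain ⟨d, rfl⟩ := Nat.exists_eq_add_of_le hab
  have hn : n - a = n - (a + d) + d := by omega
  have hk : k - a = k - (a + d) + d := by omega
  rw [hn, hk]
  exact Nat.choose_le_choose_add_add _ _ _

theorem Finset.choose_le_card_filter_powersetCard_superset {α : Type*} [Fintype α]
    [DecidableEq α] (A : Finset α) {t q : ℕ} (hA : #A ≤ t) (htq : t ≤ q)
    (hq : q ≤ Fintype.card α) :
    (Fintype.card α - t).choose (q - t) ≤ #((univ.powersetCard q).filter (A ⊆ ·)) := by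
  rw [card_filter_powersetCard_subset A univ q (subset_univ A) (hA.trans htq), card_univ]
  exact Nat.choose_sub_le_choose_sub hA htq hq

theorem Finset.exists_le_card_bipartiteBelow_of_le_card_bipartiteAbove {α β R : Type*}
    [Field R] [LinearOrder R] [IsStrictOrderedRing R] (r : α → β → Prop) [∀ a b, Decidable (r a b)] {s : Finset α} {t : Finset β}
    (ht : t.Nonempty) {m : R} (hm : ∀ a ∈ s, m ≤ #(t.bipartiteAbove r a)) :
    ∃ b ∈ t, #s * m / #t ≤ #(s.bipartiteBelow r b) := by
  by_contra! hlt
  have hcount := card_nsmul_lt_card_nsmul_of_le_of_lt r ht hm hlt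
  have hpos : (0 : R) < #t := by exact_mod_cast ht.card_pos
  rw [nsmul_eq_mul, nsmul_eq_mul, mul_div_cancel₀ _ hpos.ne'] at hcount
  exact hcount.false

/-- Cell-sampling averaging step: if each query probes at most `t` cells out of `s`,
then for any `t ≤ q ≤ s` there is a set `C` of `q` cells resolving at least
`u · C(s-t, q-t)/C(s, q)` queries. -/
theorem stmt10 (u s t q : ℕ) (p : Fin u → Finset (Fin s)) (hp : ∀ x, (p x).card ≤ t)
    (htq : t ≤ q) (hqs : q ≤ s) :
    ∃ C : Finset (Fin s), C.card = q ∧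
      (u : ℝ) * ((s - t).choose (q - t) : ℝ) / (s.choose q : ℝ)
        ≤ ((Finset.univ.filter (fun x : Fin u => p x ⊆ C)).card : ℝ) := by
  have hsets : (univ.powersetCard q : Finset (Finset (Fin s))).Nonempty :=
    powersetCard_nonempty.mpr (by simpa using hqs)
  obtain ⟨C, hC, hcount⟩ :=
    exists_le_card_bipartiteBelow_of_le_card_bipartiteAbove (fun x C ↦ p x ⊆ C) hsets
      (s := univ) (m := ((s - t).choose (q - t) : ℝ)) fun x _ ↦ by
        simpa [bipartiteAbove] using
          choose_le_card_filter_powersetCard_superset (p x) (hp x) htq (by simpa using hqs)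
  refine ⟨C, (mem_powersetCard.mp hC).2, ?_⟩
  simpa [bipartiteBelow] using hcount
end

section
/- For real numbers u, n, s, w with u ≥ 2n ≥ 2, s·w ≥ 6·n·lg(u/n), and q = (1/4)·n·lg(u/n)/w, and any integer t with 1 ≤ t ≤ (1/4)·min{q, lg(u/n)/lg(s·w/(n·lg(u/n)))}: u · ((3/4)·q/s)^t ≥ √(u·n). -/
/-- Key calculation in the lower-bound proof: under the contradiction hypothesis on
`t`, the set of `q = (1/4)·n·lg(u/n)/w` sampled cells resolves at least `√(un)`
queries, i.e. `u·((3/4)q/s)^t ≥ √(un)`. -/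
theorem stmt18 (u n s w : ℝ) (hn : 1 ≤ n) (hu : 2 * n ≤ u)
    (hs : 0 < s) (hw : 0 < w)
    (hsw : 6 * n * Real.logb 2 (u / n) ≤ s * w)
    (q : ℝ) (hq : q = (1 / 4) * n * Real.logb 2 (u / n) / w)
    (t : ℕ) (ht1 : 1 ≤ t)
    (ht : (t : ℝ) ≤ (1 / 4) * min q
      (Real.logb 2 (u / n) / Real.logb 2 (s * w / (n * Real.logb 2 (u / n))))) :
    Real.sqrt (u * n) ≤ u * ((3 / 4) * q / s) ^ t := by
  have hn0 : 0 < n := lt_of_lt_of_le one_pos hn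
  have hu0 : 0 < u := lt_of_lt_of_le (by linarith) hu
  have hun : 2 ≤ u / n := (le_div_iff₀ hn0).mpr (by linarith)
  set L := Real.logb 2 (u / n) with hLdef
  have hL1 : 1 ≤ L := by
    have := Real.logb_le_logb_of_le (b := 2) (by norm_num) (by norm_num : (0:ℝ) < 2) hun
    simpa [Real.logb_self_eq_one] using this
  have hL0 : 0 < L := lt_of_lt_of_le one_pos hL1
  set R := s * w / (n * L) with hRdef
  have hnL0 : 0 < n * L := by positivity
  have hR6 : 6 ≤ R := by
    rw [hRdef, le_div_iff₀ hnL0]; nlinarith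
  have hR0 : 0 < R := by linarith
  have hlgR : 0 < Real.logb 2 R := Real.logb_pos (by norm_num) (by linarith)
  -- from hypothesis: t * logb 2 R ≤ L / 4
  have ht' : (t : ℝ) ≤ (1 / 4) * (L / Real.logb 2 R) := by
    calc (t : ℝ) ≤ _ := ht
    _ ≤ (1 / 4) * (L / Real.logb 2 R) := by
        apply mul_le_mul_of_nonneg_left (min_le_right _ _) (by norm_num)
  have htL : (t : ℝ) * Real.logb 2 R ≤ L / 4 := by
    have h := mul_le_mul_of_nonneg_right ht' hlgR.le
    rw [mul_assoc, div_mul_cancel₀ L hlgR.ne'] at h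
    linarith
  -- R^(2t) ≤ sqrt (u/n)
  have hRpow : R ^ (2 * t) ≤ Real.sqrt (u / n) := by
    have h1 : R ^ (2 * t) = (2 : ℝ) ^ ((2 * t : ℝ) * Real.logb 2 R) := by
      rw [mul_comm ((2*t : ℝ)) _, Real.rpow_mul (by norm_num),
        Real.rpow_logb (by norm_num) (by norm_num) hR0,
        ← Real.rpow_natCast R (2 * t)]
      push_cast; ring_nf
    have h2 : (2 : ℝ) ^ ((2 * t : ℝ) * Real.logb 2 R) ≤ (2 : ℝ) ^ (L / 2) := by
      apply Real.rpow_le_rpow_of_exponent_le (by norm_num)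
      push_cast; nlinarith
    have h3 : (2 : ℝ) ^ (L / 2) = Real.sqrt (u / n) := by
      rw [show L / 2 = L * (1/2) by ring, Real.rpow_mul (by norm_num),
        Real.rpow_logb (by norm_num) (by norm_num) (by positivity),
        ← Real.sqrt_eq_rpow]
    calc R ^ (2*t) = _ := h1
      _ ≤ _ := h2
      _ = _ := h3
  -- 1/R^2 ≤ (3/4)*q/s
  have hkey : 1 / R ^ 2 ≤ (3 / 4) * q / s := by
    have heq : (3 / 4) * q / s = 3 / (16 * R) := by
      rw [hq, hRdef]; field_simp; ring
    rw [heq, div_le_div_iff₀ (by positivity) (by positivity)]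
    nlinarith
  have hpow : (1 / R ^ 2) ^ t ≤ ((3 / 4) * q / s) ^ t :=
    pow_le_pow_left₀ (by positivity) hkey t
  have hform : (1 / R ^ 2) ^ t = 1 / R ^ (2 * t) := by
    rw [one_div_pow, ← pow_mul]
  -- sqrt(un) = u / sqrt(u/n)
  have hsqrt : Real.sqrt (u * n) = u / Real.sqrt (u / n) := by
    rw [eq_div_iff (by positivity : Real.sqrt (u / n) ≠ 0),
      ← Real.sqrt_mul (by positivity) (u / n)]
    rw [show u * n * (u / n) = u ^ 2 by field_simp]
    exact Real.sqrt_sq hu0.le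
  calc Real.sqrt (u * n) = u / Real.sqrt (u / n) := hsqrt
    _ ≤ u / R ^ (2 * t) := by
        apply div_le_div_of_nonneg_left hu0.le (by positivity) hRpow
    _ = u * (1 / R ^ (2 * t)) := by ring
    _ = u * (1 / R ^ 2) ^ t := by rw [hform]
    _ ≤ u * ((3 / 4) * q / s) ^ t := by
        apply mul_le_mul_of_nonneg_left hpow hu0.le
end
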